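/- Upper bound for the binary symmetric channel: let the target alphabet be {0,1}, the decision space [0,1], the loss the absolute loss, and let the side information be the output of a binary symmetric channel with flipping probability δ ∈ [0,1] applied independently to each target bit. Let F be a class of N expert sequences in [0,1]^n whose best worst-case cumulative loss grows linearly, L*(n) = inf_{x ∈ {0,1}^n} min_θ Σ_{t=1}^n |f^θ_t − x_t| = c_f·n. Then the minimax expected regret satisfies R(n) ≤ √((n/2)·log(N+1)) + min{ 0, n·(min{δ,1−δ} − c_f) }. -/

import Mathlib

/-- The real value of a binary target symbol. -/
noncomputable def b2r (b : Bool) : ℝ := if b then 1 else 0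


open Real

lemma Dpos {p : ℝ} (hp0 : 0 ≤ p) (hp1 : p ≤ 1) (h : ℝ) : 0 < 1 - p + p * exp h := by
  rcases eq_or_lt_of_le hp0 with h0 | h0
  · simp [← h0]
  · have := exp_pos h; nlinarith

lemma hoeffding_scalar {p : ℝ} (hp0 : 0 ≤ p) (hp1 : p ≤ 1) (h : ℝ) :
    1 - p + p * exp h ≤ exp (p * h + h ^ 2 / 8) := by
  set D : ℝ → ℝ := fun h => 1 - p + p * exp h with hD
  have hDpos : ∀ h, 0 < D h := fun h => Dpos hp0 hp1 h
  set g : ℝ → ℝ := fun h => p * h + h ^ 2 / 8 - Real.log (D h) with hg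
  set g' : ℝ → ℝ := fun h => p + h / 4 - p * exp h / D h with hg'
  have hDdiff : ∀ h, HasDerivAt D (p * exp h) h := by
    intro h
    exact ((Real.hasDerivAt_exp h).const_mul p).const_add (1 - p)
  have hgdiff : ∀ h, HasDerivAt g (g' h) h := by
    intro h
    have h1 : HasDerivAt (fun h => Real.log (D h)) (p * exp h / D h) h :=
      (hDdiff h).log (hDpos h).ne'
    have h2 : HasDerivAt (fun h : ℝ => p * h + h ^ 2 / 8) (p + h / 4) h := by
      have ha := (hasDerivAt_id h).const_mul p
      have hb := (hasDerivAt_pow 2 h).div_const 8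
      have := ha.add hb
      refine this.congr_deriv ?_
      push_cast; ring
    exact h2.sub h1
  -- second derivative of g (i.e. derivative of g') is nonneg
  have hg'diff : ∀ h, HasDerivAt g'
      (1 / 4 - (p * exp h * D h - p * exp h * (p * exp h)) / (D h) ^ 2) h := by
    intro h
    have h1 : HasDerivAt (fun h => p * exp h) (p * exp h) h :=
      (Real.hasDerivAt_exp h).const_mul p
    have h2 := h1.div (hDdiff h) (hDpos h).ne'
    have h3 : HasDerivAt (fun h : ℝ => p + h / 4) (1 / 4) h := by
      simpa using ((hasDerivAt_id h).div_const 4).const_add p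
    exact h3.sub h2
  have hg'mono : Monotone g' := by
    have hdiff : Differentiable ℝ g' := fun h => (hg'diff h).differentiableAt
    apply monotone_of_deriv_nonneg hdiff
    intro h
    rw [(hg'diff h).deriv]
    have hDp := hDpos h
    have hE := exp_pos h
    have key : ∀ a b : ℝ, 0 < b → a * b - a * a ≤ 1 / 4 * b ^ 2 := by
      intro a b hb; nlinarith [sq_nonneg (b - 2 * a)]
    have : (p * exp h * D h - p * exp h * (p * exp h)) / (D h) ^ 2 ≤ 1 / 4 := by
      rw [div_le_iff₀ (by positivity)]
      exact key _ _ hDp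
    linarith
  have hg'0 : g' 0 = 0 := by
    simp [hg', hD]
  have hg0 : g 0 = 0 := by
    simp [hg, hD]
  have hgnonneg : ∀ h, 0 ≤ g h := by
    intro h
    have hcont : Continuous g := by
      have : Differentiable ℝ g := fun h => (hgdiff h).differentiableAt
      exact this.continuous
    rcases le_total 0 h with hh | hh
    · have hmono : MonotoneOn g (Set.Ici 0) := by
        apply monotoneOn_of_deriv_nonneg (convex_Ici 0) hcont.continuousOn
          (fun x _ => ((hgdiff x).differentiableAt).differentiableWithinAt)
        intro x hx
        rw [(hgdiff x).deriv]
        rw [interior_Ici] at hx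
        have := hg'mono (le_of_lt hx)
        rw [hg'0] at this
        exact this
      have := hmono (Set.self_mem_Ici) (Set.mem_Ici.2 hh) hh
      rwa [hg0] at this
    · have hanti : AntitoneOn g (Set.Iic 0) := by
        apply antitoneOn_of_deriv_nonpos (convex_Iic 0) hcont.continuousOn
          (fun x _ => ((hgdiff x).differentiableAt).differentiableWithinAt)
        intro x hx
        rw [(hgdiff x).deriv]
        rw [interior_Iic] at hx
        have := hg'mono (le_of_lt hx)
        rw [hg'0] at this
        exact this
      have := hanti (Set.mem_Iic.2 hh) (Set.self_mem_Iic) hh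
      rwa [hg0] at this
  have hlog : Real.log (D h) ≤ p * h + h ^ 2 / 8 := by
    have := hgnonneg h
    simp only [hg] at this
    linarith
  calc D h ≤ exp (Real.log (D h)) := by rw [Real.exp_log (hDpos h)]
    _ ≤ exp (p * h + h ^ 2 / 8) := exp_le_exp.2 hlog

lemma hoeffding_weighted {ι : Type*} [Fintype ι]
    (w ℓ : ι → ℝ) (hw0 : ∀ θ, 0 ≤ w θ) (hw1 : ∑ θ, w θ = 1)
    (hℓ0 : ∀ θ, 0 ≤ ℓ θ) (hℓ1 : ∀ θ, ℓ θ ≤ 1) (h : ℝ) :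
    ∑ θ, w θ * exp (h * ℓ θ) ≤ exp (h * (∑ θ, w θ * ℓ θ) + h ^ 2 / 8) := by
  have step1 : ∀ θ, exp (h * ℓ θ) ≤ (1 - ℓ θ) + ℓ θ * exp h := by
    intro θ
    have := convexOn_exp.2 (Set.mem_univ (0:ℝ)) (Set.mem_univ h)
      (by linarith [hℓ1 θ] : (0:ℝ) ≤ 1 - ℓ θ) (hℓ0 θ) (by ring)
    simpa [smul_eq_mul, mul_comm] using this
  set p : ℝ := ∑ θ, w θ * ℓ θ with hp
  have hp0 : 0 ≤ p := Finset.sum_nonneg fun θ _ => mul_nonneg (hw0 θ) (hℓ0 θ)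
  have hp1 : p ≤ 1 := by
    rw [← hw1]
    exact Finset.sum_le_sum fun θ _ =>
      mul_le_of_le_one_right (hw0 θ) (hℓ1 θ)
  calc ∑ θ, w θ * exp (h * ℓ θ)
      ≤ ∑ θ, w θ * ((1 - ℓ θ) + ℓ θ * exp h) :=
        Finset.sum_le_sum fun θ _ => mul_le_mul_of_nonneg_left (step1 θ) (hw0 θ)
    _ = 1 - p + p * exp h := by
        simp only [mul_add, mul_sub, mul_one, Finset.sum_add_distrib, Finset.sum_sub_distrib,
          ← Finset.sum_mul, hw1, ← hp]
        simp only [← mul_assoc]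
        rw [← Finset.sum_mul, ← hp]
    _ ≤ exp (p * h + h ^ 2 / 8) := hoeffding_scalar hp0 hp1 h
    _ = exp (h * p + h ^ 2 / 8) := by rw [mul_comm p h]

lemma ewa_regret {N : ℕ} (hN : 0 < N) (n : ℕ) (η : ℝ) (hη : 0 < η)
    (ℓ : Fin N → ℕ → ℝ) (hℓ0 : ∀ θ t, 0 ≤ ℓ θ t) (hℓ1 : ∀ θ t, ℓ θ t ≤ 1)
    (q : ℕ → ℝ)
    (hq : ∀ t, t < n → q t ≤ (∑ θ, Real.exp (-η * ∑ i ∈ Finset.range t, ℓ θ i) * ℓ θ t) /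
      (∑ θ, Real.exp (-η * ∑ i ∈ Finset.range t, ℓ θ i))) :
    ∀ θ0 : Fin N, ∑ t ∈ Finset.range n, q t - ∑ t ∈ Finset.range n, ℓ θ0 t
      ≤ Real.log N / η + n * η / 8 := by
  haveI : Nonempty (Fin N) := Fin.pos_iff_nonempty.1 hN
  set W : Fin N → ℕ → ℝ := fun θ t => Real.exp (-η * ∑ i ∈ Finset.range t, ℓ θ i) with hW
  set Z : ℕ → ℝ := fun t => ∑ θ, W θ t with hZ
  have hWpos : ∀ θ t, 0 < W θ t := fun θ t => exp_pos _
  have hZpos : ∀ t, 0 < Z t := fun t => Finset.sum_pos (fun θ _ => hWpos θ t) Finset.univ_nonempty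
  have key : ∀ t, t < n → Z (t + 1) ≤ Z t * exp (-η * q t + η ^ 2 / 8) := by
    intro t ht
    have hstep : Z (t + 1) = Z t * ∑ θ, (W θ t / Z t) * exp (-η * ℓ θ t) := by
      rw [Finset.mul_sum]
      apply Finset.sum_congr rfl
      intro θ _
      rw [hW]
      simp only
      rw [Finset.sum_range_succ, mul_add, Real.exp_add]
      field_simp
      exact (div_self (hZpos t).ne').symm
    rw [hstep]
    have hw0 : ∀ θ, 0 ≤ W θ t / Z t := fun θ => le_of_lt (div_pos (hWpos θ t) (hZpos t))
    have hw1 : ∑ θ, W θ t / Z t = 1 := by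
      rw [← Finset.sum_div]
      exact div_self (hZpos t).ne'
    have hhw := hoeffding_weighted (fun θ => W θ t / Z t) (fun θ => ℓ θ t) hw0 hw1
      (fun θ => hℓ0 θ t) (fun θ => hℓ1 θ t) (-η)
    have hp : -η * (∑ θ, W θ t / Z t * ℓ θ t) ≤ -η * q t := by
      apply mul_le_mul_of_nonpos_left _ (by linarith : -η ≤ 0)
      calc q t ≤ (∑ θ, W θ t * ℓ θ t) / Z t := hq t ht
        _ = ∑ θ, W θ t / Z t * ℓ θ t := by
            rw [Finset.sum_div]
            apply Finset.sum_congr rfl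
            intro θ _; ring
    calc Z t * ∑ θ, W θ t / Z t * exp (-η * ℓ θ t)
        ≤ Z t * exp (-η * (∑ θ, W θ t / Z t * ℓ θ t) + (-η) ^ 2 / 8) :=
          mul_le_mul_of_nonneg_left hhw (hZpos t).le
      _ ≤ Z t * exp (-η * q t + η ^ 2 / 8) := by
          apply mul_le_mul_of_nonneg_left _ (hZpos t).le
          apply exp_le_exp.2
          have : (-η) ^ 2 = η ^ 2 := by ring
          linarith [hp]
  have iter : ∀ m, m ≤ n →
      Z m ≤ Z 0 * exp (-η * ∑ t ∈ Finset.range m, q t + m * η ^ 2 / 8) := by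
    intro m
    induction m with
    | zero => intro _; simp
    | succ k ih =>
      intro hk
      have hk' : k ≤ n := Nat.le_of_succ_le hk
      calc Z (k + 1) ≤ Z k * exp (-η * q k + η ^ 2 / 8) := key k hk
        _ ≤ (Z 0 * exp (-η * ∑ t ∈ Finset.range k, q t + k * η ^ 2 / 8)) *
            exp (-η * q k + η ^ 2 / 8) :=
          mul_le_mul_of_nonneg_right (ih hk') (exp_pos _).le
        _ = Z 0 * exp (-η * ∑ t ∈ Finset.range (k + 1), q t + ((k + 1 : ℕ) : ℝ) * η ^ 2 / 8) := by
            have heq : (-η * ∑ t ∈ Finset.range k, q t + (k : ℝ) * η ^ 2 / 8) +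
                (-η * q k + η ^ 2 / 8)
                = -η * ∑ t ∈ Finset.range (k + 1), q t + ((k : ℕ) + 1 : ℕ) * η ^ 2 / 8 := by
              rw [Finset.sum_range_succ]
              push_cast
              ring
            rw [mul_assoc, ← Real.exp_add, heq]
  intro θ0
  have hlow : W θ0 n ≤ Z n :=
    Finset.single_le_sum (fun θ _ => (hWpos θ n).le) (Finset.mem_univ θ0)
  have hZ0 : Z 0 = N := by
    simp [hZ, hW]
  have hfinal : W θ0 n ≤ N * exp (-η * ∑ t ∈ Finset.range n, q t + n * η ^ 2 / 8) := by
    calc W θ0 n ≤ Z n := hlow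
      _ ≤ Z 0 * exp (-η * ∑ t ∈ Finset.range n, q t + n * η ^ 2 / 8) := iter n le_rfl
      _ = N * exp (-η * ∑ t ∈ Finset.range n, q t + n * η ^ 2 / 8) := by rw [hZ0]
  have hlog : -η * ∑ t ∈ Finset.range n, ℓ θ0 t ≤
      Real.log N + (-η * ∑ t ∈ Finset.range n, q t + n * η ^ 2 / 8) := by
    have h1 : Real.log (W θ0 n) ≤ Real.log (N * exp (-η * ∑ t ∈ Finset.range n, q t + n * η ^ 2 / 8)) :=
      Real.log_le_log (hWpos θ0 n) hfinal
    rw [hW] at h1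
    simp only [Real.log_exp] at h1
    rwa [Real.log_mul (by positivity) (exp_pos _).ne', Real.log_exp] at h1
  have h2 : η * (∑ t ∈ Finset.range n, q t - ∑ t ∈ Finset.range n, ℓ θ0 t)
      ≤ Real.log N + n * η ^ 2 / 8 := by nlinarith [hlog]
  calc ∑ t ∈ Finset.range n, q t - ∑ t ∈ Finset.range n, ℓ θ0 t
      = (η * (∑ t ∈ Finset.range n, q t - ∑ t ∈ Finset.range n, ℓ θ0 t)) / η := by
        field_simp
    _ ≤ (Real.log N + n * η ^ 2 / 8) / η := by
        gcongr
    _ = Real.log N / η + n * η / 8 := by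
        field_simp

lemma sum_prod_weights {n : ℕ} (w : Fin n → Bool → ℝ)
    (hw : ∀ t, w t true + w t false = 1) :
    ∑ s : Fin n → Bool, ∏ t, w t (s t) = 1 := by
  classical
  have := Finset.prod_univ_sum (fun _ : Fin n => (Finset.univ : Finset Bool)) (fun t b => w t b)
  rw [Fintype.piFinset_univ] at this
  rw [← this]
  rw [Finset.prod_eq_one]
  intro t _
  rw [Fintype.sum_bool]
  exact hw t

lemma sum_prod_weights_marginal {n : ℕ} (w : Fin n → Bool → ℝ)
    (hw : ∀ t, w t true + w t false = 1) (t0 : Fin n) (g : Bool → ℝ) :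
    ∑ s : Fin n → Bool, (∏ t, w t (s t)) * g (s t0)
      = w t0 true * g true + w t0 false * g false := by
  classical
  have h1 : ∀ s : Fin n → Bool, (∏ t, w t (s t)) * g (s t0)
      = ∏ t, (w t (s t) * (if t = t0 then g (s t) else 1)) := by
    intro s
    rw [Finset.prod_mul_distrib, Finset.prod_ite_eq' Finset.univ t0 (fun t => g (s t))]
    simp
  simp only [h1]
  have := Finset.prod_univ_sum (fun _ : Fin n => (Finset.univ : Finset Bool))
    (fun t b => w t b * (if t = t0 then g b else 1))
  rw [Fintype.piFinset_univ] at this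
  rw [← this]
  rw [Finset.prod_eq_single t0]
  · simp [Fintype.sum_bool]
  · intro t _ ht
    simp [ht, Fintype.sum_bool, hw t]
  · simp

lemma pred_convex {N : ℕ} [Nonempty (Fin N)] (w g : Fin N → ℝ) (hw : ∀ θ, 0 < w θ) (c : ℝ) :
    |(∑ θ, w θ * g θ) / (∑ θ, w θ) - c| ≤ (∑ θ, w θ * |g θ - c|) / (∑ θ, w θ) := by
  have hZ : 0 < ∑ θ, w θ := Finset.sum_pos (fun θ _ => hw θ) Finset.univ_nonempty
  rw [div_sub' hZ.ne', abs_div, abs_of_pos hZ]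
  gcongr
  calc |∑ θ, w θ * g θ - (∑ θ, w θ) * c| = |∑ θ, w θ * (g θ - c)| := by
        congr 1
        rw [Finset.sum_mul, ← Finset.sum_sub_distrib]
        apply Finset.sum_congr rfl
        intro θ _
        ring
    _ ≤ ∑ θ, |w θ * (g θ - c)| := Finset.abs_sum_le_sum_abs _ _
    _ = ∑ θ, w θ * |g θ - c| := by
        apply Finset.sum_congr rfl
        intro θ _
        rw [abs_mul, abs_of_pos (hw θ)]

lemma eta_bound (n N : ℕ) (hn : 0 < n) (hN : 0 < N) :
    0 < Real.sqrt (8 * Real.log (N + 1) / n) ∧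
    Real.log N / Real.sqrt (8 * Real.log (N + 1) / n) +
      n * Real.sqrt (8 * Real.log (N + 1) / n) / 8
      ≤ Real.sqrt ((n / 2) * Real.log (N + 1)) := by
  set L := Real.log (N + 1) with hLdef
  have hL : 0 < L := by
    apply Real.log_pos
    have : (1 : ℝ) ≤ N := by exact_mod_cast hN
    linarith
  have hn' : (0 : ℝ) < n := by exact_mod_cast hn
  set η := Real.sqrt (8 * L / n) with hη
  have hηpos : 0 < η := Real.sqrt_pos.2 (by positivity)
  refine ⟨hηpos, ?_⟩
  have hη2 : η ^ 2 = 8 * L / n := Real.sq_sqrt (by positivity)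
  have hlogle : Real.log N ≤ L := by
    apply Real.log_le_log (by exact_mod_cast hN)
    push_cast; linarith
  have hterm : n * η / 8 = L / η := by
    rw [eq_div_iff hηpos.ne']
    have : n * η / 8 * η = n * η ^ 2 / 8 := by ring
    rw [this, hη2]
    field_simp
  have hsq : (2 * L / η) ^ 2 = (n / 2) * L := by
    rw [div_pow, hη2]
    field_simp
    ring
  have hfin : 2 * L / η = Real.sqrt ((n / 2) * L) := by
    rw [← hsq, Real.sqrt_sq (by positivity)]
  calc Real.log N / η + n * η / 8 ≤ L / η + L / η := by
        rw [hterm]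
        gcongr
    _ = 2 * L / η := by ring
    _ = Real.sqrt ((n / 2) * L) := hfin

noncomputable def ewaF (n N : ℕ) (η : ℝ) (f : Fin N → Fin n → ℝ) :
    (t : Fin n) → (Fin (t.1 + 1) → Bool) → (Fin t.1 → Bool) → ℝ :=
  fun t _ past =>
    (∑ θ, Real.exp (-η * ∑ i, |f θ (Fin.castLE t.isLt.le i) - b2r (past i)|) * f θ t) /
    (∑ θ, Real.exp (-η * ∑ i, |f θ (Fin.castLE t.isLt.le i) - b2r (past i)|))

noncomputable def sideF (n : ℕ) (flip : Bool) :
    (t : Fin n) → (Fin (t.1 + 1) → Bool) → (Fin t.1 → Bool) → ℝ :=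
  fun t a _ => b2r (xor flip (a (Fin.last t.1)))

lemma abs_b2r_le {c : ℝ} (hc : c ∈ Set.Icc (0:ℝ) 1) (b : Bool) : |c - b2r b| ≤ 1 := by
  rcases hc with ⟨h0, h1⟩
  rw [abs_le]; cases b <;> simp [b2r] <;> constructor <;> linarith

lemma ewa_per_x {n N : ℕ} (hn : 0 < n) (hN : 0 < N) (f : Fin N → Fin n → ℝ)
    (hf : ∀ θ t, f θ t ∈ Set.Icc (0:ℝ) 1) (η : ℝ) (hη : 0 < η) (x : Fin n → Bool)
    (a : (t : Fin n) → Fin (t.1 + 1) → Bool) :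
    (∑ t, |ewaF n N η f t (a t) (fun i => x (Fin.castLE t.isLt.le i)) - b2r (x t)|)
      - (⨅ θ : Fin N, ∑ t, |f θ t - b2r (x t)|)
      ≤ Real.log N / η + n * η / 8 := by
  classical
  haveI : Nonempty (Fin N) := Fin.pos_iff_nonempty.1 hN
  set ℓx : Fin N → ℕ → ℝ :=
    fun θ i => if h : i < n then |f θ ⟨i, h⟩ - b2r (x ⟨i, h⟩)| else 0 with hℓx
  set q : ℕ → ℝ := fun i => if h : i < n then
      |ewaF n N η f ⟨i, h⟩ (a ⟨i, h⟩) (fun j => x (Fin.castLE (le_of_lt h) j)) - b2r (x ⟨i, h⟩)|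
    else 0 with hqdef
  have hℓ0 : ∀ θ t, 0 ≤ ℓx θ t := by
    intro θ t; rw [hℓx]; dsimp only; split
    · exact abs_nonneg _
    · exact le_rfl
  have hℓ1 : ∀ θ t, ℓx θ t ≤ 1 := by
    intro θ t; rw [hℓx]; dsimp only; split
    · exact abs_b2r_le (hf _ _) _
    · norm_num
  have hsum : ∀ (θ : Fin N) (t : Fin n),
      (∑ i, |f θ (Fin.castLE t.isLt.le i) - b2r (x (Fin.castLE t.isLt.le i))|)
        = ∑ i ∈ Finset.range t.1, ℓx θ i := by
    intro θ t
    rw [Finset.sum_range]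
    apply Finset.sum_congr rfl
    intro i _
    rw [hℓx]
    dsimp only
    rw [dif_pos (lt_of_lt_of_le i.isLt t.isLt.le)]
    rfl
  have hq : ∀ τ, τ < n → q τ ≤
      (∑ θ, Real.exp (-η * ∑ i ∈ Finset.range τ, ℓx θ i) * ℓx θ τ) /
        (∑ θ, Real.exp (-η * ∑ i ∈ Finset.range τ, ℓx θ i)) := by
    intro τ hτ
    rw [hqdef]
    dsimp only
    rw [dif_pos hτ]
    have hτ' : (⟨τ, hτ⟩ : Fin n).1 = τ := rfl
    simp only [ewaF]
    have hrw : ∀ θ : Fin N,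
        (∑ i : Fin τ, |f θ (Fin.castLE (le_of_lt hτ) i)
          - b2r (x (Fin.castLE (le_of_lt hτ) i))|) = ∑ i ∈ Finset.range τ, ℓx θ i :=
      fun θ => hsum θ ⟨τ, hτ⟩
    simp only [hrw]
    have hconv := pred_convex (fun θ => Real.exp (-η * ∑ i ∈ Finset.range τ, ℓx θ i))
      (fun θ => f θ ⟨τ, hτ⟩) (fun θ => Real.exp_pos _) (b2r (x ⟨τ, hτ⟩))
    refine le_trans hconv ?_
    apply le_of_eq
    congr 1
    apply Finset.sum_congr rfl
    intro θ _
    congr 1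
    rw [hℓx]; dsimp only; rw [dif_pos hτ]
  have hmain := ewa_regret hN n η hη ℓx hℓ0 hℓ1 q hq
  have hQ : ∑ t ∈ Finset.range n, q t =
      ∑ t : Fin n, |ewaF n N η f t (a t) (fun i => x (Fin.castLE t.isLt.le i)) - b2r (x t)| := by
    rw [Finset.sum_range]
    apply Finset.sum_congr rfl
    intro t _
    rw [hqdef]
    dsimp only
    rw [dif_pos t.isLt]
  have hLθ : ∀ θ0 : Fin N, ∑ t ∈ Finset.range n, ℓx θ0 t = ∑ t : Fin n, |f θ0 t - b2r (x t)| := by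
    intro θ0
    rw [Finset.sum_range]
    apply Finset.sum_congr rfl
    intro t _
    rw [hℓx]; dsimp only; rw [dif_pos t.isLt]
  have hfin : ∀ θ0 : Fin N,
      (∑ t : Fin n, |ewaF n N η f t (a t) (fun i => x (Fin.castLE t.isLt.le i)) - b2r (x t)|)
        - (Real.log N / η + n * η / 8) ≤ ∑ t, |f θ0 t - b2r (x t)| := by
    intro θ0
    have := hmain θ0
    rw [hQ, hLθ θ0] at this
    linarith
  have := le_ciInf hfin
  linarith

lemma side_per_x {n : ℕ} (δ : ℝ) (flip : Bool) (x : Fin n → Bool) :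
    ∑ s : Fin n → Bool, (∏ t, if s t = x t then 1 - δ else δ) *
      (∑ t, |sideF n flip t (fun i => s (Fin.castLE t.isLt i))
        (fun i => x (Fin.castLE t.isLt.le i)) - b2r (x t)|)
    = n * (if flip then 1 - δ else δ) := by
  classical
  have hcast : ∀ t : Fin n, Fin.castLE t.isLt (Fin.last t.1) = t := fun _ => rfl
  have hinner : ∀ (s : Fin n → Bool) (t : Fin n),
      |sideF n flip t (fun i => s (Fin.castLE t.isLt i))
        (fun i => x (Fin.castLE t.isLt.le i)) - b2r (x t)|
      = |b2r (xor flip (s t)) - b2r (x t)| := by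
    intro s t
    simp only [sideF, hcast]
  simp only [hinner]
  have hswap : ∑ s : Fin n → Bool, (∏ t, if s t = x t then 1 - δ else δ) *
      (∑ t, |b2r (xor flip (s t)) - b2r (x t)|)
      = ∑ t : Fin n, ∑ s : Fin n → Bool,
        (∏ u, if s u = x u then 1 - δ else δ) * |b2r (xor flip (s t)) - b2r (x t)| := by
    rw [Finset.sum_comm]
    apply Finset.sum_congr rfl
    intro s _
    rw [Finset.mul_sum]
  rw [hswap]
  have hmarg : ∀ t : Fin n, ∑ s : Fin n → Bool,
      (∏ u, if s u = x u then 1 - δ else δ) * |b2r (xor flip (s t)) - b2r (x t)|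
      = (if flip then 1 - δ else δ) := by
    intro t
    have := sum_prod_weights_marginal (fun u b => if b = x u then 1 - δ else δ)
      (by intro u; cases hxu : x u <;> simp [hxu] <;> ring) t (fun b => |b2r (xor flip b) - b2r (x t)|)
    rw [this]
    cases hx : x t <;> cases flip <;> simp [b2r] <;> norm_num
  simp only [hmarg]
  simp [Finset.sum_const, Finset.card_univ]
  split_ifs <;> ring

/-- **Corollary 1 (upper bound for the binary symmetric channel).**
Target alphabet `{0,1}`, decision space `[0,1]`, absolute loss; the side bits
are conditionally independent with `P(S_t = x_t) = 1−δ`, `P(S_t = 1−x_t) = δ`.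
If the best worst-case cumulative expert loss grows linearly,
`L*(n) = inf_x min_θ Σ_t |f^θ_t − x_t| = c_f·n`, then the minimax expected
regret satisfies `R(n) ≤ √((n/2)·log(N+1)) + min{0, n·(min{δ,1−δ} − c_f)}`. -/
theorem bsc_minimax_regret_upper_bound
    (n N : ℕ) (hn : 0 < n) (hN : 0 < N)
    (δ : ℝ) (hδ0 : 0 ≤ δ) (hδ1 : δ ≤ 1)
    (f : Fin N → Fin n → ℝ) (hf : ∀ θ t, f θ t ∈ Set.Icc (0:ℝ) 1)
    (cf : ℝ)
    (hL : (⨅ x : Fin n → Bool, ⨅ θ : Fin N, ∑ t, |f θ t - b2r (x t)|) = cf * n) :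
    (⨅ F : {F : (t : Fin n) → (Fin (t.1 + 1) → Bool) → (Fin t.1 → Bool) → ℝ //
        (∀ t, Measurable (Function.uncurry (F t))) ∧
        (∀ t a b, F t a b ∈ Set.Icc (0:ℝ) 1)},
      ⨆ x : Fin n → Bool,
        ∑ s : Fin n → Bool,
          (∏ t, if s t = x t then 1 - δ else δ) *
            ((∑ t, |F.1 t (fun i => s (Fin.castLE t.isLt i))
                (fun i => x (Fin.castLE t.isLt.le i)) - b2r (x t)|)
              - ⨅ θ : Fin N, ∑ t, |f θ t - b2r (x t)|))
    ≤ Real.sqrt ((n / 2) * Real.log (N + 1)) + min 0 (n * (min δ (1 - δ) - cf)) := by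
  classical
  haveI hNE : Nonempty (Fin N) := Fin.pos_iff_nonempty.1 hN
  haveI hnE : Nonempty (Fin n) := Fin.pos_iff_nonempty.1 hn
  have hBnonneg : (0:ℝ) ≤ Real.sqrt ((n / 2) * Real.log (N + 1)) := Real.sqrt_nonneg _
  -- probability weights sum to one
  have hP0 : ∀ (x s : Fin n → Bool), 0 ≤ ∏ t, if s t = x t then 1 - δ else δ := by
    intro x s
    apply Finset.prod_nonneg
    intro t _
    split <;> linarith
  have hP1 : ∀ x : Fin n → Bool,
      ∑ s : Fin n → Bool, (∏ t, if s t = x t then 1 - δ else δ) = 1 := by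
    intro x
    exact sum_prod_weights (fun t b => if b = x t then 1 - δ else δ)
      (by intro u; cases hxu : x u <;> simp [hxu] <;> ring)
  -- bounds on the comparator loss
  have hm_nonneg : ∀ x : Fin n → Bool, 0 ≤ ⨅ θ : Fin N, ∑ t, |f θ t - b2r (x t)| := by
    intro x
    exact le_ciInf fun θ => Finset.sum_nonneg fun t _ => abs_nonneg _
  have hm_le_n : ∀ x : Fin n → Bool, (⨅ θ : Fin N, ∑ t, |f θ t - b2r (x t)|) ≤ n := by
    intro x
    obtain ⟨θ0⟩ := hNE
    refine le_trans (ciInf_le (Set.finite_range _).bddBelow θ0) ?_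
    calc ∑ t, |f θ0 t - b2r (x t)| ≤ ∑ _t : Fin n, (1:ℝ) :=
          Finset.sum_le_sum fun t _ => abs_b2r_le (hf θ0 t) (x t)
      _ = n := by simp
  have hcf_le : ∀ x : Fin n → Bool, cf * n ≤ ⨅ θ : Fin N, ∑ t, |f θ t - b2r (x t)| := by
    intro x
    rw [← hL]
    exact ciInf_le (Set.finite_range _).bddBelow x
  -- generic lower bound for any forecaster and any x
  have hlow : ∀ (G : (t : Fin n) → (Fin (t.1 + 1) → Bool) → (Fin t.1 → Bool) → ℝ)
      (x : Fin n → Bool), -(n:ℝ) ≤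
      ∑ s : Fin n → Bool, (∏ t, if s t = x t then 1 - δ else δ) *
        ((∑ t, |G t (fun i => s (Fin.castLE t.isLt i))
            (fun i => x (Fin.castLE t.isLt.le i)) - b2r (x t)|)
          - ⨅ θ : Fin N, ∑ t, |f θ t - b2r (x t)|) := by
    intro G x
    have : ∀ s : Fin n → Bool,
        (∏ t, if s t = x t then 1 - δ else δ) * (-(n:ℝ)) ≤
        (∏ t, if s t = x t then 1 - δ else δ) *
          ((∑ t, |G t (fun i => s (Fin.castLE t.isLt i))
              (fun i => x (Fin.castLE t.isLt.le i)) - b2r (x t)|)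
            - ⨅ θ : Fin N, ∑ t, |f θ t - b2r (x t)|) := by
      intro s
      apply mul_le_mul_of_nonneg_left _ (hP0 x s)
      have h1 : (0:ℝ) ≤ ∑ t, |G t (fun i => s (Fin.castLE t.isLt i))
          (fun i => x (Fin.castLE t.isLt.le i)) - b2r (x t)| :=
        Finset.sum_nonneg fun t _ => abs_nonneg _
      linarith [hm_le_n x]
    calc -(n:ℝ) = ∑ s : Fin n → Bool, (∏ t, if s t = x t then 1 - δ else δ) * (-(n:ℝ)) := by
          rw [← Finset.sum_mul, hP1 x, one_mul]
      _ ≤ _ := Finset.sum_le_sum fun s _ => this s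
  -- bounded below
  have hbdd : BddBelow (Set.range fun F : {F : (t : Fin n) → (Fin (t.1 + 1) → Bool) →
      (Fin t.1 → Bool) → ℝ //
        (∀ t, Measurable (Function.uncurry (F t))) ∧
        (∀ t a b, F t a b ∈ Set.Icc (0:ℝ) 1)} =>
      ⨆ x : Fin n → Bool,
        ∑ s : Fin n → Bool,
          (∏ t, if s t = x t then 1 - δ else δ) *
            ((∑ t, |F.1 t (fun i => s (Fin.castLE t.isLt i))
                (fun i => x (Fin.castLE t.isLt.le i)) - b2r (x t)|)
              - ⨅ θ : Fin N, ∑ t, |f θ t - b2r (x t)|)) := by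
    refine ⟨-(n:ℝ), ?_⟩
    rintro y ⟨F, rfl⟩
    refine le_trans (hlow F.1 (fun _ => false)) ?_
    exact le_ciSup_of_le (Set.finite_range _).bddAbove (fun _ => false) le_rfl
  rcases le_or_gt 0 (n * (min δ (1 - δ) - cf)) with hc | hc
  · -- use the exponential weights forecaster
    obtain ⟨hηpos, hηbound⟩ := eta_bound n N hn hN
    set η := Real.sqrt (8 * Real.log (N + 1) / n) with hηdef
    have hZpos : ∀ (t : Fin n) (b : Fin t.1 → Bool),
        0 < ∑ θ, Real.exp (-η * ∑ i, |f θ (Fin.castLE t.isLt.le i) - b2r (b i)|) :=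
      fun t b => Finset.sum_pos (fun θ _ => Real.exp_pos _) Finset.univ_nonempty
    rw [min_eq_left hc, add_zero]
    refine ciInf_le_of_le hbdd ⟨ewaF n N η f, ?_, ?_⟩ ?_
    · intro t
      exact measurable_of_countable _
    · intro t a b
      simp only [ewaF]
      constructor
      · apply div_nonneg _ (hZpos t b).le
        exact Finset.sum_nonneg fun θ _ => mul_nonneg (Real.exp_pos _).le (hf θ t).1
      · rw [div_le_one (hZpos t b)]
        exact Finset.sum_le_sum fun θ _ =>
          mul_le_of_le_one_right (Real.exp_pos _).le (hf θ t).2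
    · apply ciSup_le
      intro x
      have hAC : ∀ s : Fin n → Bool,
          (∑ t, |ewaF n N η f t (fun i => s (Fin.castLE t.isLt i))
              (fun i => x (Fin.castLE t.isLt.le i)) - b2r (x t)|)
          = ∑ t, |ewaF n N η f t (fun _ => false)
              (fun i => x (Fin.castLE t.isLt.le i)) - b2r (x t)| := fun s => rfl
      simp only [hAC]
      rw [← Finset.sum_mul, hP1 x, one_mul]
      have hkey := ewa_per_x hn hN f hf η hηpos x (fun t => fun _ => false)
      linarith [hkey, hηbound]
  · -- use the side-information forecaster
    set flip : Bool := decide (1 - δ < δ) with hflip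
    have hval : ((n:ℝ) * (if flip then 1 - δ else δ)) = n * min δ (1 - δ) := by
      rcases le_or_gt δ (1 - δ) with h | h
      · have hfl : flip = false := by
          rw [hflip, decide_eq_false_iff_not]; exact not_lt.2 h
        rw [hfl, min_eq_left h]; simp
      · have hfl : flip = true := by
          rw [hflip, decide_eq_true_iff]
          exact h
        rw [hfl, min_eq_right h.le]; simp
    rw [min_eq_right hc.le]
    refine ciInf_le_of_le hbdd ⟨sideF n flip, ?_, ?_⟩ ?_
    · intro t
      exact measurable_of_countable _
    · intro t a b
      simp only [sideF]
      cases xor flip (a (Fin.last t.1)) <;> simp [b2r]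
    · apply ciSup_le
      intro x
      have hexp : ∑ s : Fin n → Bool, (∏ t, if s t = x t then 1 - δ else δ) *
          ((∑ t, |sideF n flip t (fun i => s (Fin.castLE t.isLt i))
              (fun i => x (Fin.castLE t.isLt.le i)) - b2r (x t)|)
            - ⨅ θ : Fin N, ∑ t, |f θ t - b2r (x t)|)
          = (n * (if flip then 1 - δ else δ))
            - ⨅ θ : Fin N, ∑ t, |f θ t - b2r (x t)| := by
        simp only [mul_sub]
        rw [Finset.sum_sub_distrib, side_per_x δ flip x, ← Finset.sum_mul, hP1 x, one_mul]
      rw [hexp, hval]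
      have h1 := hcf_le x
      have hexpand : (n:ℝ) * (min δ (1 - δ) - cf) = n * min δ (1 - δ) - cf * n := by ring
      linarith
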